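/- (Coarse Ricci lower bound property, weighted Euclidean case.) Let ρ : ℝⁿ → ℝ be smooth (C³) and K ∈ ℝ. Then the Bakry–Emery Ricci lower bound Hess ρ_x(v,v) ≥ K‖v‖² for all x ∈ ℝⁿ and all v ∈ ℝⁿ holds if and only if the coarse Ricci curvature of the weighted Laplacian satisfies Ric_{Δ_ρ}(x,y) ≥ K·d²(x,y) for all x, y ∈ ℝⁿ. -/

import Mathlib

open scoped RealInnerProductSpace

/-- The Euclidean Laplacian: the trace of the Hessian, i.e. the sum of pure second
partial derivatives. -/
noncomputable def eLap {n : ℕ} (f : EuclideanSpace ℝ (Fin n) → ℝ)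
    (x : EuclideanSpace ℝ (Fin n)) : ℝ :=
  ∑ i, fderiv ℝ (fun y => fderiv ℝ f y (EuclideanSpace.single i 1)) x (EuclideanSpace.single i 1)

/-- The carré du champ of an operator `L`: `Γ(L,u,v) = (1/2)(L(uv) − (Lu)v − u(Lv))`. -/
noncomputable def carre {n : ℕ}
    (L : (EuclideanSpace ℝ (Fin n) → ℝ) → EuclideanSpace ℝ (Fin n) → ℝ)
    (u v : EuclideanSpace ℝ (Fin n) → ℝ) (z : EuclideanSpace ℝ (Fin n)) : ℝ :=
  (1/2) * (L (fun w => u w * v w) z - L u z * v z - u z * L v z)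

/-- The iterated carré du champ (diagonal):
`Γ₂(L,f,f) = (1/2)(L(Γ(L,f,f)) − 2Γ(L,Lf,f))`. -/
noncomputable def gamma2 {n : ℕ}
    (L : (EuclideanSpace ℝ (Fin n) → ℝ) → EuclideanSpace ℝ (Fin n) → ℝ)
    (f : EuclideanSpace ℝ (Fin n) → ℝ) (z : EuclideanSpace ℝ (Fin n)) : ℝ :=
  (1/2) * (L (carre L f f) z - 2 * carre L (L f) f z)

/-- The weighted Laplacian `Δ_ρ f = Δf − ⟨∇ρ, ∇f⟩`. -/
noncomputable def wLap {n : ℕ} (ρ f : EuclideanSpace ℝ (Fin n) → ℝ)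
    (z : EuclideanSpace ℝ (Fin n)) : ℝ :=
  eLap f z - ⟪gradient ρ z, gradient f z⟫

/-- The Hessian matrix of second partial derivatives. -/
noncomputable def hess {n : ℕ} (f : EuclideanSpace ℝ (Fin n) → ℝ)
    (z : EuclideanSpace ℝ (Fin n)) (i j : Fin n) : ℝ :=
  fderiv ℝ (fun y => fderiv ℝ f y (EuclideanSpace.single j 1)) z (EuclideanSpace.single i 1)

/-- The test function `f_{x,y}(z) = (1/2)(d²(x,y) − d²(y,z) + d²(z,x))`. -/
noncomputable def testFn {n : ℕ} (x y z : EuclideanSpace ℝ (Fin n)) : ℝ :=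
  (1/2) * (dist x y ^ 2 - dist y z ^ 2 + dist z x ^ 2)

/-- The coarse Ricci curvature of an operator `L`:
`Ric_L(x,y) = Γ₂(L, f_{x,y}, f_{x,y})(x)`. -/
noncomputable def cRic {n : ℕ}
    (L : (EuclideanSpace ℝ (Fin n) → ℝ) → EuclideanSpace ℝ (Fin n) → ℝ)
    (x y : EuclideanSpace ℝ (Fin n)) : ℝ :=
  gamma2 L (testFn x y) x

/-! The test function `f_{x,y}` is affine, `f_{x,y}(z) = c + ⟪y - x, z⟫`. For an affine `a`
with slope `w` the product rule gives `Γ(Δ_ρ, u, a) = du(w)`, so `Γ(a, a) = ‖w‖²` is constant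
and `Δ_ρ a = -dρ(w)`; hence `Γ₂(a, a) = d²ρ(w, w)` and
`Ric_{Δ_ρ}(x, y) = Hess ρ_x(y - x, y - x)`. Both directions of the equivalence then follow by
substituting `y = x + v`. -/

lemma EuclideanSpace.map_eq_sum_smul {ι F G : Type*} [Fintype ι] [DecidableEq ι]
    [AddCommGroup F] [Module ℝ F] [FunLike G (EuclideanSpace ℝ ι) F]
    [LinearMapClass G ℝ (EuclideanSpace ℝ ι) F] (L : G) (v : EuclideanSpace ℝ ι) :
    L v = ∑ i, v i • L (EuclideanSpace.single i 1) := by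
  conv_lhs => rw [← (EuclideanSpace.basisFun ι ℝ).sum_repr v]
  simp [map_sum, map_smul]

section

variable {n : ℕ}

local notation "E" => EuclideanSpace ℝ (Fin n)

lemma wLap_eq_eLap_sub_fderiv (ρ f : E → ℝ) (z : E) :
    wLap ρ f z = eLap f z - fderiv ℝ f z (gradient ρ z) := by
  rw [wLap, real_inner_comm, inner_gradient_left]

lemma fderiv_fderiv_apply {f : E → ℝ} {x : E} (hf : DifferentiableAt ℝ (fderiv ℝ f) x)
    (u v : E) : fderiv ℝ (fun z => fderiv ℝ f z v) x u = fderiv ℝ (fderiv ℝ f) x u v := by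
  rw [fderiv_clm_apply hf (differentiableAt_const v)]
  simp

lemma sum_hess_mul_mul {f : E → ℝ} (hf : ContDiff ℝ 2 f) (x v : E) :
    ∑ i, ∑ j, hess f x i j * v i * v j = fderiv ℝ (fun z => fderiv ℝ f z v) x v := by
  have hdf : DifferentiableAt ℝ (fderiv ℝ f) x :=
    (hf.fderiv_right (m := 1) (by norm_num)).differentiable (by norm_num) x
  simp only [hess, fderiv_fderiv_apply hdf]
  rw [EuclideanSpace.map_eq_sum_smul (fderiv ℝ (fderiv ℝ f) x v),
    EuclideanSpace.map_eq_sum_smul (fderiv ℝ (fderiv ℝ f) x) v]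
  simp only [sum_apply, smul_apply, smul_eq_mul, Finset.mul_sum]
  rw [Finset.sum_comm]
  refine Finset.sum_congr rfl fun i _ => Finset.sum_congr rfl fun j _ => by ring

noncomputable def affineFn (w : E) (c : ℝ) : E → ℝ := fun z => c + ⟪w, z⟫

lemma hasFDerivAt_affineFn (w : E) (c : ℝ) (z : E) :
    HasFDerivAt (affineFn w c) (innerSL ℝ w) z :=
  (innerSL ℝ w).hasFDerivAt.const_add c

lemma differentiable_affineFn (w : E) (c : ℝ) : Differentiable ℝ (affineFn w c) :=
  fun z => (hasFDerivAt_affineFn w c z).differentiableAt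

lemma fderiv_affineFn_apply (w : E) (c : ℝ) (z u : E) :
    fderiv ℝ (affineFn w c) z u = ⟪w, u⟫ := by
  rw [(hasFDerivAt_affineFn w c z).fderiv, innerSL_apply_apply]

lemma contDiff_affineFn (w : E) (c : ℝ) {k : WithTop ℕ∞} : ContDiff ℝ k (affineFn w c) :=
  contDiff_const.add (innerSL ℝ w).contDiff

lemma eLap_affineFn (w : E) (c : ℝ) (z : E) : eLap (affineFn w c) z = 0 := by
  simp [eLap, fderiv_affineFn_apply]

lemma wLap_affineFn (ρ : E → ℝ) (w : E) (c : ℝ) (z : E) :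
    wLap ρ (affineFn w c) z = -fderiv ℝ ρ z w := by
  rw [wLap_eq_eLap_sub_fderiv, eLap_affineFn, fderiv_affineFn_apply, real_inner_comm,
    inner_gradient_left, zero_sub]

lemma wLap_const (ρ : E → ℝ) (a : ℝ) (z : E) : wLap ρ (fun _ => a) z = 0 := by
  have : (fun _ : E => a) = affineFn 0 a := by ext; simp [affineFn]
  rw [this, wLap_affineFn, map_zero, neg_zero]

lemma fderiv_mul_affineFn_apply {u : E → ℝ} {y : E} (hu : DifferentiableAt ℝ u y) (w : E)
    (c : ℝ) (m : E) :
    fderiv ℝ (fun t => u t * affineFn w c t) y m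
      = fderiv ℝ u y m * affineFn w c y + u y * ⟪w, m⟫ := by
  rw [fderiv_fun_mul hu (differentiable_affineFn w c y), add_apply, smul_apply, smul_apply,
    fderiv_affineFn_apply, smul_eq_mul, smul_eq_mul]
  ring

lemma fderiv_fderiv_mul_affineFn_apply {u : E → ℝ} (hu : ContDiff ℝ 2 u) (w : E) (c : ℝ)
    (z m : E) :
    fderiv ℝ (fun y => fderiv ℝ (fun t => u t * affineFn w c t) y m) z m
      = fderiv ℝ (fun y => fderiv ℝ u y m) z m * affineFn w c z
        + 2 * (⟪w, m⟫ * fderiv ℝ u z m) := by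
  have hdu : Differentiable ℝ u := hu.differentiable (by norm_num)
  have hdpartial : DifferentiableAt ℝ (fun y => fderiv ℝ u y m) z :=
    ((hu.fderiv_right (m := 1) (by norm_num)).clm_apply contDiff_const).differentiable
      (by norm_num) z
  have hprod : DifferentiableAt ℝ (fun y => fderiv ℝ u y m * affineFn w c y) z :=
    hdpartial.mul (differentiable_affineFn w c z)
  simp_rw [fderiv_mul_affineFn_apply (hdu _)]
  rw [fderiv_fun_add hprod ((hdu z).mul_const _), add_apply,
    fderiv_mul_affineFn_apply hdpartial, fderiv_mul_const (hdu z), smul_apply, smul_eq_mul]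
  ring

lemma eLap_mul_affineFn {u : E → ℝ} (hu : ContDiff ℝ 2 u) (w : E) (c : ℝ) (z : E) :
    eLap (fun t => u t * affineFn w c t) z
      = eLap u z * affineFn w c z + 2 * fderiv ℝ u z w := by
  simp only [eLap, fderiv_fderiv_mul_affineFn_apply hu, EuclideanSpace.inner_single_right,
    one_mul, conj_trivial, Finset.sum_add_distrib, ← Finset.sum_mul, ← Finset.mul_sum,
    ← smul_eq_mul (a := w _), ← EuclideanSpace.map_eq_sum_smul]

lemma wLap_mul_affineFn (ρ : E → ℝ) {u : E → ℝ} (hu : ContDiff ℝ 2 u) (w : E) (c : ℝ)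
    (z : E) :
    wLap ρ (fun t => u t * affineFn w c t) z
      = affineFn w c z * wLap ρ u z + 2 * fderiv ℝ u z w + u z * wLap ρ (affineFn w c) z := by
  rw [wLap_eq_eLap_sub_fderiv, eLap_mul_affineFn hu,
    fderiv_mul_affineFn_apply (hu.differentiable (by norm_num) z), wLap_eq_eLap_sub_fderiv ρ u,
    wLap_affineFn, real_inner_comm, inner_gradient_left]
  ring

lemma carre_wLap_affineFn (ρ : E → ℝ) {u : E → ℝ} (hu : ContDiff ℝ 2 u) (w : E) (c : ℝ)
    (z : E) : carre (wLap ρ) u (affineFn w c) z = fderiv ℝ u z w := by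
  rw [carre, wLap_mul_affineFn ρ hu]
  ring

lemma gamma2_wLap_affineFn {ρ : E → ℝ} (hρ : ContDiff ℝ 3 ρ) (w : E) (c : ℝ) (x : E) :
    gamma2 (wLap ρ) (affineFn w c) x = fderiv ℝ (fun z => fderiv ℝ ρ z w) x w := by
  have hΓ : carre (wLap ρ) (affineFn w c) (affineFn w c) = fun _ => ⟪w, w⟫ := by
    ext z
    rw [carre_wLap_affineFn ρ (contDiff_affineFn w c), fderiv_affineFn_apply]
  have hL : wLap ρ (affineFn w c) = fun z => -fderiv ℝ ρ z w := by
    ext z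
    exact wLap_affineFn ρ w c z
  have hdρ : ContDiff ℝ 2 (fun z => fderiv ℝ ρ z w) :=
    (hρ.fderiv_right (m := 2) (by norm_num)).clm_apply contDiff_const
  rw [gamma2, hΓ, wLap_const, hL, carre_wLap_affineFn ρ hdρ.neg, fderiv_fun_neg, neg_apply]
  ring

lemma testFn_eq_affineFn (x y : E) :
    testFn x y = affineFn (y - x) ((1/2) * (dist x y ^ 2 - ‖y‖ ^ 2 + ‖x‖ ^ 2)) := by
  ext z
  rw [testFn, affineFn, dist_eq_norm y z, dist_eq_norm z x, norm_sub_sq_real,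
    norm_sub_sq_real, inner_sub_left, real_inner_comm z x]
  ring

lemma cRic_wLap_eq_sum_hess {ρ : E → ℝ} (hρ : ContDiff ℝ 3 ρ) (x y : E) :
    cRic (wLap ρ) x y = ∑ i, ∑ j, hess ρ x i j * (y - x) i * (y - x) j := by
  rw [cRic, testFn_eq_affineFn, gamma2_wLap_affineFn hρ,
    sum_hess_mul_mul (hρ.of_le (by norm_num))]

end

/-- **coarse Ricci lower bound property.** For a C³ weight `ρ` and
`K ∈ ℝ`, the Bakry–Emery bound `Hess ρ_x(v,v) ≥ K‖v‖²` for all `x, v` holds iff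
`Ric_{Δ_ρ}(x,y) ≥ K·d²(x,y)` for all `x, y`. -/
theorem coarse_ricci_lower_bound_iff_hessian_lower_bound
    {n : ℕ} (ρ : EuclideanSpace ℝ (Fin n) → ℝ) (hρ : ContDiff ℝ 3 ρ) (K : ℝ) :
    (∀ x v : EuclideanSpace ℝ (Fin n),
        K * ‖v‖ ^ 2 ≤ ∑ i, ∑ j, hess ρ x i j * v i * v j)
      ↔ (∀ x y : EuclideanSpace ℝ (Fin n),
        K * dist x y ^ 2 ≤ cRic (wLap ρ) x y) := by
  constructor
  · intro h x y
    rw [cRic_wLap_eq_sum_hess hρ, dist_comm, dist_eq_norm]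
    exact h x (y - x)
  · intro h x v
    simpa [cRic_wLap_eq_sum_hess hρ, dist_eq_norm] using h x (x + v)
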